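/- Consider a finite two-player stochastic game. For every V = (V₁, V₂) : X → ℝ² and every state x ∈ X, the sum of the components of the HS Bellman update equals the cooperative Bellman update of the component sum: [T V]₁(x) + [T V]₂(x) = [T₁₂ (V₁ + V₂)](x), where [T₁₂ V](x) = max_{a ∈ A} Σ_{y∈X} P(x,a,y)(R₁(x,a,y) + R₂(x,a,y) + γ V(y)). -/

import Mathlib

open Finset

/-- The maxmin value of a two-player zero-sum game with payoff `W` to the maximizer:
`sup` over mixed strategies of the row player of the `inf` over mixed strategies of the
column player of the expected payoff. -/
noncomputable def maxmin {S T : Type*} [Fintype S] [Fintype T] (W : S → T → ℝ) : ℝ :=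
  ⨆ σ : stdSimplex ℝ S, ⨅ τ : stdSimplex ℝ T,
    ∑ s : S, ∑ t : T, σ.1 s * τ.1 t * W s t

/-- The two-player Harsanyi–Shapley (Coco) value of player 1:
`HS₁(G) = ½(max_a(U₁(a)+U₂(a)) + maxmin₁(U₁−U₂))`, where player 1 maximizes. -/
noncomputable def hs1 {A₁ A₂ : Type*} [Fintype A₁] [Fintype A₂]
    (U₁ U₂ : A₁ → A₂ → ℝ) : ℝ :=
  (1 / 2) * ((⨆ a : A₁ × A₂, (U₁ a.1 a.2 + U₂ a.1 a.2)) +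
    maxmin (fun a₁ a₂ => U₁ a₁ a₂ - U₂ a₁ a₂))

/-- The two-player Harsanyi–Shapley (Coco) value of player 2:
`HS₂(G) = ½(max_a(U₁(a)+U₂(a)) + maxmin₂(U₂−U₁))`, where player 2 maximizes. -/
noncomputable def hs2 {A₁ A₂ : Type*} [Fintype A₁] [Fintype A₂]
    (U₁ U₂ : A₁ → A₂ → ℝ) : ℝ :=
  (1 / 2) * ((⨆ a : A₁ × A₂, (U₁ a.1 a.2 + U₂ a.1 a.2)) +
    maxmin (fun a₂ a₁ => U₂ a₁ a₂ - U₁ a₁ a₂))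

/-- The zero-sum Bellman operator with coalition reward `U` and maximizing player 1:
`[T₁ V](x)` is the maxmin (over `Δ(A₁) × Δ(A₂)`) of
`(a₁,a₂) ↦ Σ_y P(x,(a₁,a₂),y)(U(x,(a₁,a₂),y) + γ V(y))`. -/
noncomputable def bellmanZS1 {X A₁ A₂ : Type*} [Fintype X] [Fintype A₁] [Fintype A₂]
    (P : X → A₁ × A₂ → X → ℝ) (γ : ℝ) (U : X → A₁ × A₂ → X → ℝ)
    (V : X → ℝ) : X → ℝ := fun x =>
  maxmin (fun a₁ a₂ => ∑ y : X, P x (a₁, a₂) y * (U x (a₁, a₂) y + γ * V y))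

/-- The zero-sum Bellman operator with coalition reward `U` and maximizing player 2:
`[T₂ V](x)` is the maxmin over `Δ(A₂) × Δ(A₁)` (player 2 maximizing) of
`(a₂,a₁) ↦ Σ_y P(x,(a₁,a₂),y)(U(x,(a₁,a₂),y) + γ V(y))`. -/
noncomputable def bellmanZS2 {X A₁ A₂ : Type*} [Fintype X] [Fintype A₁] [Fintype A₂]
    (P : X → A₁ × A₂ → X → ℝ) (γ : ℝ) (U : X → A₁ × A₂ → X → ℝ)
    (V : X → ℝ) : X → ℝ := fun x =>
  maxmin (fun a₂ a₁ => ∑ y : X, P x (a₁, a₂) y * (U x (a₁, a₂) y + γ * V y))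

/-- The cooperative Bellman operator:
`[T₁₂ V](x) = max_{a∈A} Σ_y P(x,a,y)(R₁(x,a,y) + R₂(x,a,y) + γ V(y))`. -/
noncomputable def bellmanCoop {X A₁ A₂ : Type*} [Fintype X] [Fintype A₁] [Fintype A₂]
    (P : X → A₁ × A₂ → X → ℝ) (γ : ℝ) (R₁ R₂ : X → A₁ × A₂ → X → ℝ)
    (V : X → ℝ) : X → ℝ := fun x =>
  ⨆ a : A₁ × A₂, ∑ y : X, P x a y * (R₁ x a y + R₂ x a y + γ * V y)

/-- The HS Bellman operator: `[T V](x) = HS(G_x(V))`, where `G_x(V)` is the two-player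
normal-form game with utilities `U_i(x,a,V) = Σ_y P(x,a,y)(R_i(x,a,y) + γ V_i(y))`. -/
noncomputable def bellmanHS {X A₁ A₂ : Type*} [Fintype X] [Fintype A₁] [Fintype A₂]
    (P : X → A₁ × A₂ → X → ℝ) (γ : ℝ) (R₁ R₂ : X → A₁ × A₂ → X → ℝ)
    (V : X → ℝ × ℝ) : X → ℝ × ℝ := fun x =>
  (hs1 (fun a₁ a₂ => ∑ y : X, P x (a₁, a₂) y * (R₁ x (a₁, a₂) y + γ * (V y).1))
       (fun a₁ a₂ => ∑ y : X, P x (a₁, a₂) y * (R₂ x (a₁, a₂) y + γ * (V y).2)),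
   hs2 (fun a₁ a₂ => ∑ y : X, P x (a₁, a₂) y * (R₁ x (a₁, a₂) y + γ * (V y).1))
       (fun a₁ a₂ => ∑ y : X, P x (a₁, a₂) y * (R₂ x (a₁, a₂) y + γ * (V y).2)))

section HSAuxiliary

open Set Pointwise


/-- Theorem of the alternative for matrix games. -/
theorem matrix_alternative {S T : Type*} [Fintype S] [Fintype T] [Nonempty T] (W : S → T → ℝ) :
    (∃ τ ∈ stdSimplex ℝ T, ∀ s, ∑ t, τ t * W s t ≤ 0) ∨
    (∃ σ ∈ stdSimplex ℝ S, ∀ t, 0 < ∑ s, σ s * W s t) := by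
  classical
  set L : (T → ℝ) →ₗ[ℝ] (S → ℝ) :=
    { toFun := fun τ => fun s => ∑ t, τ t * W s t
      map_add' := by
        intro τ₁ τ₂; funext s; simp [add_mul, Finset.sum_add_distrib]
      map_smul' := by
        intro c τ; funext s; simp [Finset.mul_sum, mul_assoc] } with hL
  have hLcont : Continuous L := by
    apply continuous_pi
    intro s
    exact continuous_finset_sum _ fun t _ => (continuous_apply t).mul continuous_const
  set Q : Set (S → ℝ) := {y : S → ℝ | ∀ s, 0 ≤ y s} with hQ
  have hQconv : Convex ℝ Q := by
    intro y hy z hz a b ha hb _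
    intro s
    have := hy s; have := hz s
    have : 0 ≤ a * y s + b * z s := by positivity
    simpa using this
  have hQclosed : IsClosed Q := by
    have : Q = ⋂ s, {y : S → ℝ | 0 ≤ y s} := by
      ext y; simp [hQ, Set.mem_iInter]
    rw [this]
    exact isClosed_iInter fun s => isClosed_le continuous_const (continuous_apply s)
  set K : Set (S → ℝ) := L '' stdSimplex ℝ T with hK
  have hKcomp : IsCompact K := (isCompact_stdSimplex ℝ T).image hLcont
  have hKconv : Convex ℝ K := (convex_stdSimplex ℝ T).linear_image L
  set C : Set (S → ℝ) := K + Q with hC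
  have hCconv : Convex ℝ C := hKconv.add hQconv
  have hCclosed : IsClosed C := by
    rw [hC]
    exact hQclosed.add_left_of_isCompact hKcomp
  by_cases h0 : (0 : S → ℝ) ∈ C
  · left
    obtain ⟨k, hk, q, hq, hkq⟩ := Set.mem_add.1 h0
    obtain ⟨τ, hτ, rfl⟩ := hk
    refine ⟨τ, hτ, fun s => ?_⟩
    have := congrFun hkq s
    have hqs := hq s
    simp only [Pi.add_apply, Pi.zero_apply] at this
    have : (L τ) s = -q s := by linarith
    rw [show (∑ t, τ t * W s t) = L τ s from rfl, this]
    linarith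
  · right
    obtain ⟨f, u, hfu, hu0⟩ := geometric_hahn_banach_closed_point hCconv hCclosed h0
    rw [map_zero] at hu0
    -- pick a base point of C
    obtain ⟨t₀⟩ := ‹Nonempty T›
    have hmemC : ∀ (k : S → ℝ), k ∈ K → ∀ q ∈ Q, k + q ∈ C := fun k hk q hq =>
      Set.add_mem_add hk hq
    have hwt : ∀ t : T, (fun s => W s t) ∈ C := by
      intro t
      have h1 : (fun s => W s t) = L (Pi.single t 1) + 0 := by
        funext s
        simp [hL, Pi.single_apply, mul_comm]
      rw [h1]
      exact hmemC _ ⟨Pi.single t 1, single_mem_stdSimplex ℝ t, rfl⟩ 0 (fun s => le_rfl)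
    have ha₀ : (fun s => W s t₀) ∈ C := hwt t₀
    -- f(e_s) ≤ 0 for each s
    have hes : ∀ s : S, f (Pi.single s 1) ≤ 0 := by
      intro s
      by_contra h
      push_neg at h
      set a₀ : S → ℝ := fun s => W s t₀ with ha₀def
      set lam : ℝ := max 0 ((u - f a₀) / f (Pi.single s 1) + 1) with hlam
      have hlam0 : 0 ≤ lam := le_max_left _ _
      have hmem : a₀ + lam • (Pi.single s (1:ℝ) : S → ℝ) ∈ C := by
        obtain ⟨k, hk, q, hq, hkq⟩ := Set.mem_add.1 ha₀
        have : a₀ + lam • (Pi.single s (1:ℝ) : S → ℝ) = k + (q + lam • (Pi.single s (1:ℝ) : S → ℝ)) := by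
          rw [← hkq]; abel
        rw [this]
        refine hmemC k hk _ (fun s' => ?_)
        have := hq s'
        have h2 : (0:ℝ) ≤ lam • (Pi.single s (1:ℝ) : S → ℝ) s' := by
          rcases eq_or_ne s' s with rfl | hne
          · simp [hlam0]
          · simp [Pi.single_apply, hne.symm]
        simpa using add_nonneg this h2
      have hlt := hfu _ hmem
      rw [map_add, map_smul] at hlt
      have hge : (u - f a₀) / f (Pi.single s 1) + 1 ≤ lam := le_max_right _ _
      have : u - f a₀ + f (Pi.single s 1) ≤ lam * f (Pi.single s 1) := by
        have := mul_le_mul_of_nonneg_right hge (le_of_lt h)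
        rw [add_mul, div_mul_cancel₀ _ (ne_of_gt h), one_mul] at this
        linarith
      simp only [smul_eq_mul] at hlt
      linarith
    -- representation of f
    have hrep : ∀ y : S → ℝ, f y = ∑ s, y s * f (Pi.single s 1) := by
      intro y
      have h1 : y = ∑ s, y s • (Pi.single s 1 : S → ℝ) := by
        funext s'
        rw [Finset.sum_apply]
        simp [Pi.single_apply, Finset.sum_ite_eq' Finset.univ s']
      conv_lhs => rw [h1]
      rw [map_sum]
      simp [smul_eq_mul]
    set σ₀ : S → ℝ := fun s => -f (Pi.single s 1) with hσ₀
    have hσ₀nn : ∀ s, 0 ≤ σ₀ s := fun s => by simpa [hσ₀] using hes s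
    have hpos : ∀ t, 0 < ∑ s, σ₀ s * W s t := by
      intro t
      have := hfu _ (hwt t)
      rw [hrep] at this
      have h2 : ∑ s, W s t * f (Pi.single s 1) = -∑ s, σ₀ s * W s t := by
        rw [← Finset.sum_neg_distrib]
        exact Finset.sum_congr rfl fun s _ => by simp [hσ₀]; ring
      rw [h2] at this
      linarith
    have hSpos : 0 < ∑ s, σ₀ s := by
      rcases (Finset.sum_nonneg fun s _ => hσ₀nn s).lt_or_eq with h | h
      · exact h
      · exfalso
        have hall : ∀ s ∈ Finset.univ, σ₀ s = 0 :=
          (Finset.sum_eq_zero_iff_of_nonneg fun s _ => hσ₀nn s).1 h.symm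
        have := hpos t₀
        rw [Finset.sum_eq_zero (fun s hs => by rw [hall s hs, zero_mul])] at this
        exact lt_irrefl 0 this
    refine ⟨fun s => σ₀ s / (∑ s', σ₀ s'), ⟨fun s => div_nonneg (hσ₀nn s) hSpos.le, ?_⟩, ?_⟩
    · rw [← Finset.sum_div, div_self hSpos.ne']
    · intro t
      have : ∑ s, σ₀ s / ((∑ s', σ₀ s')) * W s t = (∑ s, σ₀ s * W s t) / (∑ s', σ₀ s') := by
        rw [Finset.sum_div]
        exact Finset.sum_congr rfl fun s _ => by ring
      rw [this]
      exact div_pos (hpos t) hSpos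

section MiniMax

variable {S T : Type*} [Fintype S] [Fintype T]

noncomputable def pay (W : S → T → ℝ) (σ : S → ℝ) (τ : T → ℝ) : ℝ :=
  ∑ s : S, ∑ t : T, σ s * τ t * W s t

noncomputable def matB (W : S → T → ℝ) : ℝ := ∑ s : S, ∑ t : T, |W s t|

instance instNESimplex [Nonempty S] : Nonempty (stdSimplex ℝ S) := by
  refine ⟨⟨fun _ => (Fintype.card S : ℝ)⁻¹, fun s => by positivity, ?_⟩⟩
  have hc : (0:ℝ) < (Fintype.card S : ℝ) := by
    have := Fintype.card_pos (α := S)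
    exact_mod_cast this
  rw [Finset.sum_const, nsmul_eq_mul, Finset.card_univ, mul_inv_cancel₀ hc.ne']

lemma abs_pay_le (W : S → T → ℝ) {σ : S → ℝ} {τ : T → ℝ}
    (hσ : σ ∈ stdSimplex ℝ S) (hτ : τ ∈ stdSimplex ℝ T) :
    |pay W σ τ| ≤ matB W := by
  refine (Finset.abs_sum_le_sum_abs _ _).trans (Finset.sum_le_sum fun s _ => ?_)
  refine (Finset.abs_sum_le_sum_abs _ _).trans (Finset.sum_le_sum fun t _ => ?_)
  have h1 : 0 ≤ σ s := hσ.1 s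
  have h2 : σ s ≤ 1 := (mem_Icc_of_mem_stdSimplex hσ s).2
  have h3 : 0 ≤ τ t := hτ.1 t
  have h4 : τ t ≤ 1 := (mem_Icc_of_mem_stdSimplex hτ t).2
  rw [abs_mul, abs_mul, abs_of_nonneg h1, abs_of_nonneg h3]
  have h5 : σ s * τ t ≤ 1 := by nlinarith
  have h6 := mul_le_mul_of_nonneg_right h5 (abs_nonneg (W s t))
  linarith

lemma bddBelow_pay [Nonempty T] (W : S → T → ℝ) (σ : stdSimplex ℝ S) :
    BddBelow (Set.range fun τ : stdSimplex ℝ T => pay W σ.1 τ.1) := by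
  refine ⟨-(matB W), fun x ⟨τ, hτ⟩ => ?_⟩
  rw [← hτ]
  linarith [abs_le.1 (abs_pay_le W σ.2 τ.2)]

lemma bddAbove_inf [Nonempty T] (W : S → T → ℝ) :
    BddAbove (Set.range fun σ : stdSimplex ℝ S => ⨅ τ : stdSimplex ℝ T, pay W σ.1 τ.1) := by
  refine ⟨matB W, fun x ⟨σ, hσ⟩ => ?_⟩
  rw [← hσ]
  obtain ⟨τ₀⟩ : Nonempty (stdSimplex ℝ T) := instNESimplex
  exact (ciInf_le (bddBelow_pay W σ) τ₀).trans (abs_le.1 (abs_pay_le W σ.2 τ₀.2)).2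

lemma pay_neg_transpose (W : S → T → ℝ) (σ : S → ℝ) (τ : T → ℝ) :
    pay (fun t s => -W s t) τ σ = -pay W σ τ := by
  unfold pay
  rw [Finset.sum_comm, ← Finset.sum_neg_distrib]
  exact Finset.sum_congr rfl fun s _ => by
    rw [← Finset.sum_neg_distrib]
    exact Finset.sum_congr rfl fun t _ => by ring


theorem maxmin_add_neg_transpose [Nonempty S] [Nonempty T] (W : S → T → ℝ) :
    maxmin W + maxmin (fun t s => -W s t) = 0 := by
  classical
  have hM : maxmin W = ⨆ σ : stdSimplex ℝ S, ⨅ τ : stdSimplex ℝ T, pay W σ.1 τ.1 := rfl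
  have hN : maxmin (fun t s => -W s t)
      = ⨆ τ : stdSimplex ℝ T, ⨅ σ : stdSimplex ℝ S, pay (fun t s => -W s t) τ.1 σ.1 := rfl
  have hub : maxmin W + maxmin (fun t s => -W s t) ≤ 0 := by
    have h1 : ∀ σ : stdSimplex ℝ S,
        maxmin (fun t s => -W s t) ≤ -(⨅ τ : stdSimplex ℝ T, pay W σ.1 τ.1) := by
      intro σ
      rw [hN]
      refine ciSup_le fun τ => ?_
      have h3 : (⨅ σ' : stdSimplex ℝ S, pay (fun t s => -W s t) τ.1 σ'.1)
          ≤ pay (fun t s => -W s t) τ.1 σ.1 := ciInf_le (bddBelow_pay _ τ) σ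
      have h4 : (⨅ τ' : stdSimplex ℝ T, pay W σ.1 τ'.1) ≤ pay W σ.1 τ.1 :=
        ciInf_le (bddBelow_pay W σ) τ
      rw [pay_neg_transpose] at h3
      linarith
    have h2 : maxmin W ≤ -maxmin (fun t s => -W s t) := by
      rw [hM]
      exact ciSup_le fun σ => by linarith [h1 σ]
    linarith
  have hlb : 0 ≤ maxmin W + maxmin (fun t s => -W s t) := by
    set r : ℝ := (maxmin W - maxmin (fun t s => -W s t)) / 2 with hr
    rcases matrix_alternative (fun s t => W s t - r) with ⟨τ, hτ, hτle⟩ | ⟨σ, hσ, hσgt⟩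
    · have h1 : ∀ σ' : stdSimplex ℝ S, -r ≤ pay (fun t s => -W s t) τ σ'.1 := by
        intro σ'
        have hsum : ∀ s, ∑ t, τ t * W s t ≤ r := by
          intro s
          have h0 := hτle s
          have hexp : ∑ t, τ t * (W s t - r) = (∑ t, τ t * W s t) - r := by
            rw [show (fun t => τ t * (W s t - r)) = fun t => τ t * W s t - τ t * r from
              funext fun t => by ring]
            rw [Finset.sum_sub_distrib, ← Finset.sum_mul, hτ.2, one_mul]
          linarith [hexp ▸ h0]
        rw [pay_neg_transpose]
        have : pay W σ'.1 τ ≤ r := by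
          unfold pay
          calc ∑ s, ∑ t, σ'.1 s * τ t * W s t
              = ∑ s, σ'.1 s * ∑ t, τ t * W s t := by
                refine Finset.sum_congr rfl fun s _ => ?_
                rw [Finset.mul_sum]
                exact Finset.sum_congr rfl fun t _ => by ring
            _ ≤ ∑ s, σ'.1 s * r :=
                Finset.sum_le_sum fun s _ =>
                  mul_le_mul_of_nonneg_left (hsum s) (σ'.2.1 s)
            _ = r := by rw [← Finset.sum_mul, σ'.2.2, one_mul]
        linarith
      have h2 : -r ≤ ⨅ σ' : stdSimplex ℝ S,
          pay (fun t s => -W s t) (⟨τ, hτ⟩ : stdSimplex ℝ T).1 σ'.1 :=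
        le_ciInf fun σ' => h1 σ'
      have h3 : (⨅ σ' : stdSimplex ℝ S,
          pay (fun t s => -W s t) (⟨τ, hτ⟩ : stdSimplex ℝ T).1 σ'.1)
          ≤ maxmin (fun t s => -W s t) := by
        rw [hN]
        exact le_ciSup (bddAbove_inf _) ⟨τ, hτ⟩
      rw [hr] at h2
      linarith
    · have h1 : ∀ τ' : stdSimplex ℝ T, r ≤ pay W σ τ'.1 := by
        intro τ'
        have hsum : ∀ t, r ≤ ∑ s, σ s * W s t := by
          intro t
          have h0 := hσgt t
          have hexp : ∑ s, σ s * (W s t - r) = (∑ s, σ s * W s t) - r := by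
            rw [show (fun s => σ s * (W s t - r)) = fun s => σ s * W s t - σ s * r from
              funext fun s => by ring]
            rw [Finset.sum_sub_distrib, ← Finset.sum_mul, hσ.2, one_mul]
          linarith [hexp ▸ h0]
        unfold pay
        calc r = ∑ t, τ'.1 t * r := by rw [← Finset.sum_mul, τ'.2.2, one_mul]
          _ ≤ ∑ t, τ'.1 t * ∑ s, σ s * W s t :=
              Finset.sum_le_sum fun t _ =>
                mul_le_mul_of_nonneg_left (hsum t) (τ'.2.1 t)
          _ = ∑ s, ∑ t, σ s * τ'.1 t * W s t := by
              rw [Finset.sum_comm]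
              refine Finset.sum_congr rfl fun t _ => ?_
              rw [Finset.mul_sum]
              exact Finset.sum_congr rfl fun s _ => by ring
      have h2 : r ≤ ⨅ τ' : stdSimplex ℝ T, pay W (⟨σ, hσ⟩ : stdSimplex ℝ S).1 τ'.1 :=
        le_ciInf fun τ' => h1 τ'
      have h3 : (⨅ τ' : stdSimplex ℝ T, pay W (⟨σ, hσ⟩ : stdSimplex ℝ S).1 τ'.1)
          ≤ maxmin W := by
        rw [hM]
        exact le_ciSup (bddAbove_inf W) ⟨σ, hσ⟩
      rw [hr] at h2
      linarith
  linarith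

end MiniMax

lemma hs1_add_hs2 {A₁ A₂ : Type*} [Fintype A₁] [Fintype A₂] [Nonempty A₁] [Nonempty A₂]
    (U₁ U₂ : A₁ → A₂ → ℝ) :
    hs1 U₁ U₂ + hs2 U₁ U₂ = ⨆ a : A₁ × A₂, (U₁ a.1 a.2 + U₂ a.1 a.2) := by
  have hneg : (fun a₂ a₁ => U₂ a₁ a₂ - U₁ a₁ a₂)
      = fun a₂ a₁ => -((fun b₁ b₂ => U₁ b₁ b₂ - U₂ b₁ b₂) a₁ a₂) := by
    funext a₂ a₁; simp
  have h := maxmin_add_neg_transpose (fun a₁ a₂ => U₁ a₁ a₂ - U₂ a₁ a₂)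
  unfold hs1 hs2
  rw [hneg]
  linarith

end HSAuxiliary

/-- In a finite two-player stochastic game, the sum of the components of the HS
Bellman update equals the cooperative Bellman update of the component sum. -/
theorem hs_bellman_sum {X A₁ A₂ : Type*} [Fintype X] [Fintype A₁] [Fintype A₂]
    [Nonempty X] [Nonempty A₁] [Nonempty A₂]
    (P : X → A₁ × A₂ → X → ℝ)
    (hP_nonneg : ∀ x a y, 0 ≤ P x a y) (hP_sum : ∀ x a, ∑ y : X, P x a y = 1)
    (γ : ℝ) (hγ0 : 0 ≤ γ) (hγ1 : γ < 1)
    (R₁ R₂ : X → A₁ × A₂ → X → ℝ) (V : X → ℝ × ℝ) (x : X) :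
    (bellmanHS P γ R₁ R₂ V x).1 + (bellmanHS P γ R₁ R₂ V x).2 =
      bellmanCoop P γ R₁ R₂ (fun y => (V y).1 + (V y).2) x := by
  simp only [bellmanHS, bellmanCoop]
  rw [hs1_add_hs2]
  congr 1
  funext a
  rw [← Finset.sum_add_distrib]
  exact Finset.sum_congr rfl fun y _ => by ring
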